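/- arXiv:1211.4260 — 3 statements merged into one kernel-verified Lean document; each statement's English description precedes it below -/
import Mathlib

section
/- Let 𝒜 be a complex unital algebra with a linear functional τ : 𝒜 → ℂ satisfying τ(𝟙) = 1, let Z ∈ 𝒜, and write m_i = τ(Z^i). Then for all n, k ≥ 1: Σ_{ν ∈ NC^k(n+k)} R_ν(Z) = Σ_{i=0}^{n-1} m_i · Σ_{ν ∈ NC^{k+1}(k+n−i)} R_ν(Z) + R_k(Z) · m_n. -/
/-- A partition of `{0,…,n-1}` is non-crossing if no two distinct blocks cross. -/
def IsNonCrossing {n : ℕ} (ν : Finpartition (Finset.univ : Finset (Fin n))) : Prop :=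
  ∀ B ∈ ν.parts, ∀ C ∈ ν.parts, B ≠ C →
    ∀ i ∈ B, ∀ k ∈ B, ∀ j ∈ C, ∀ l ∈ C, i < j → j < k → k < l → False

/-- The first `k` elements of `{0,…,n-1}` all lie in one block of the partition
(this is the defining condition of the class `NC^k`). -/
def FirstTogether {n : ℕ} (k : ℕ)
    (ν : Finpartition (Finset.univ : Finset (Fin n))) : Prop :=
  ∃ B ∈ ν.parts, ∀ i : Fin n, (i : ℕ) < k → i ∈ B

/-- `R_ν(X₁,…,Xₙ) = ∏_{B ∈ ν} R_{|B|}(X_i : i ∈ B)`, the product of cumulant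
functionals over the blocks of a partition (arguments in increasing order). -/
noncomputable def partCum {A : Type*} [Ring A] (R : (k : ℕ) → (Fin k → A) → ℂ)
    {n : ℕ} (X : Fin n → A)
    (ν : Finpartition (Finset.univ : Finset (Fin n))) : ℂ :=
  ∏ B ∈ ν.parts, R B.card (fun i => X (B.orderIsoOfFin rfl i).1)

/-- `R` is the family of free cumulant functionals of `τ` : the moment–cumulant
formula `τ(X₁⋯Xₙ) = Σ_{ν ∈ NC(n)} R_ν(X₁,…,Xₙ)` holds. -/
def MomentCumulant {A : Type*} [Ring A] [Algebra ℂ A] (τ : A →ₗ[ℂ] ℂ)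
    (R : (k : ℕ) → (Fin k → A) → ℂ) : Prop :=
  ∀ n : ℕ, 0 < n → ∀ X : Fin n → A,
    τ (List.ofFn X).prod =
      ∑ᶠ ν : {ν : Finpartition (Finset.univ : Finset (Fin n)) // IsNonCrossing ν},
        partCum R X ν.1

/-- `c^k` sums : `ncSum R Z k m = Σ_{ν ∈ NC^k(m)} R_ν(Z,…,Z)`. -/
noncomputable def ncSum {A : Type*} [Ring A] (R : (k : ℕ) → (Fin k → A) → ℂ)
    (Z : A) (k m : ℕ) : ℂ :=
  ∑ᶠ ν : {ν : Finpartition (Finset.univ : Finset (Fin m)) //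
      IsNonCrossing ν ∧ FirstTogether k ν},
    partCum R (fun _ => Z) ν.1

/-- `X` and `Y` are freely independent: all their mixed free cumulants vanish. -/
def FreeIndep {A : Type*} [Ring A] (R : (k : ℕ) → (Fin k → A) → ℂ)
    (X Y : A) : Prop :=
  ∀ k : ℕ, ∀ W : Fin k → A,
    (∀ i, W i = X ∨ W i = Y) → (∃ i j, W i ≠ W j) → R k W = 0

/-!
Classify `ν ∈ NC^k(n + k)` by the first element `k + i` (`i < n`) beyond `0, …, k - 1` of the
block containing them, with `i = n` if there is none. Since `ν` is non-crossing, the interval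
`k, …, k + i - 1` is a union of blocks, so `ν` is glued from a partition in `NC(i)` of that
interval and a partition in `NC^{k+1}(k + n - i)` of the complement (for `i = n` the single block
`{0, …, k - 1}`); conversely every such pair glues to a partition of this class. Block products
factor under gluing, and the sum over `NC(i)` is `mᵢ` by the moment–cumulant formula.
-/

open Finset

instance Setoid.decidableRelKer {α β : Type*} [DecidableEq β] (f : α → β) :
    DecidableRel (Setoid.ker f) :=
  fun _ _ => decEq (f _) (f _)

lemma IsCompl.exists_apply_eq_of_range {α β γ : Type*} {g : α → γ} {h : β → γ}
    (hgh : IsCompl (Set.range g) (Set.range h)) (z : γ) : (∃ x, g x = z) ∨ ∃ y, h y = z :=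
  (Set.ext_iff.1 hgh.sup_eq_top z).2 trivial

namespace Finpartition

section Part

variable {α : Type*} [DecidableEq α] {s : Finset α} (P : Finpartition s)

lemma mem_part_comm {a b : α} : a ∈ P.part b ↔ b ∈ P.part a := by
  simp only [mem_part_iff_exists]
  exact exists_congr fun _ => and_congr_right fun _ => and_comm

lemma mem_part_trans {a b c : α} (hab : a ∈ P.part b) (hbc : b ∈ P.part c) : a ∈ P.part c :=
  P.part_eq_of_mem (P.part_mem.2 (P.part_nonempty.1 ⟨b, hbc⟩)) hbc ▸ hab

lemma ext_part {Q : Finpartition s} (h : ∀ a, P.part a = Q.part a) : P = Q := by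
  have key (P : Finpartition s) (B : Finset α) : B ∈ P.parts ↔ ∃ a ∈ s, P.part a = B :=
    ⟨fun hB => P.part_surjOn hB, by rintro ⟨a, ha, rfl⟩; exact P.part_mem.2 ha⟩
  ext B
  simp only [key, h]

end Part

section Comap

variable {α γ : Type*} [Fintype α] [DecidableEq α] [DecidableEq γ]

def comap (f : α → γ) {s : Finset γ} (ν : Finpartition s) : Finpartition (univ : Finset α) :=
  ofSetoid (Setoid.ker (ν.part ∘ f))

variable [Fintype γ]

lemma mem_part_comap {f : α → γ} {ν : Finpartition (univ : Finset γ)} {x y : α} :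
    y ∈ (ν.comap f).part x ↔ f y ∈ ν.part (f x) := by
  rw [comap, mem_part_ofSetoid_iff_rel, ν.mem_part_iff_part_eq_part (mem_univ _) (mem_univ _)]
  exact eq_comm

end Comap

section Glue

variable {α β γ : Type*} [Fintype α] [DecidableEq α] [Fintype β] [DecidableEq β]
  [DecidableEq γ] {g : α ↪ γ} {h : β ↪ γ}

lemma existsUnique_mem_map_union (hgh : IsCompl (Set.range g) (Set.range h))
    (P : Finpartition (univ : Finset α)) (Q : Finpartition (univ : Finset β)) (x : α) :
    ∃! t ∈ P.parts.map (mapEmbedding g).toEmbedding ∪ Q.parts.map (mapEmbedding h).toEmbedding,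
      g x ∈ t := by
  refine ⟨(P.part x).map g, ⟨mem_union_left _ (mem_map_of_mem _ (P.part_mem.2 (mem_univ x))),
    mem_map_of_mem _ (P.mem_part (mem_univ x))⟩, ?_⟩
  rintro t ⟨ht, hxt⟩
  simp only [mem_union, mem_map, RelEmbedding.coe_toEmbedding, mapEmbedding_apply] at ht
  rcases ht with ⟨B, hB, rfl⟩ | ⟨C, -, rfl⟩
  · rw [P.part_eq_of_mem hB (by simpa using hxt)]
  · obtain ⟨y, -, hy⟩ := mem_map.1 hxt
    exact absurd hy.symm (Set.disjoint_range_iff.1 hgh.disjoint x y)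

variable [Fintype γ]

def glue (hgh : IsCompl (Set.range g) (Set.range h))
    (P : Finpartition (univ : Finset α)) (Q : Finpartition (univ : Finset β)) :
    Finpartition (univ : Finset γ) :=
  ofExistsUnique
    (P.parts.map (mapEmbedding g).toEmbedding ∪ Q.parts.map (mapEmbedding h).toEmbedding)
    (fun _ _ => subset_univ _)
    (fun z _ => by
      rcases hgh.exists_apply_eq_of_range z with ⟨x, rfl⟩ | ⟨y, rfl⟩
      · exact existsUnique_mem_map_union hgh P Q x
      · rw [union_comm]; exact existsUnique_mem_map_union hgh.symm Q P y)
    (by simp [P.empty_notMem_parts, Q.empty_notMem_parts])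

variable (hgh : IsCompl (Set.range g) (Set.range h))
  (P : Finpartition (univ : Finset α)) (Q : Finpartition (univ : Finset β))

lemma part_glue_left (x : α) : (glue hgh P Q).part (g x) = (P.part x).map g :=
  (glue hgh P Q).part_eq_of_mem
    (mem_union_left _ (mem_map_of_mem _ (P.part_mem.2 (mem_univ x))))
    (mem_map_of_mem _ (P.mem_part (mem_univ x)))

lemma part_glue_right (y : β) : (glue hgh P Q).part (h y) = (Q.part y).map h :=
  (glue hgh P Q).part_eq_of_mem
    (mem_union_right _ (mem_map_of_mem _ (Q.part_mem.2 (mem_univ y))))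
    (mem_map_of_mem _ (Q.mem_part (mem_univ y)))

lemma comap_glue_left : (glue hgh P Q).comap g = P :=
  ext_part _ fun x => by ext y; simp [mem_part_comap, part_glue_left]

lemma comap_glue_right : (glue hgh P Q).comap h = Q :=
  ext_part _ fun y => by ext y'; simp [mem_part_comap, part_glue_right]

lemma glue_comap {ν : Finpartition (univ : Finset γ)} (hν : ∀ x y, h y ∉ ν.part (g x)) :
    glue hgh (ν.comap g) (ν.comap h) = ν := by
  refine ext_part _ fun z => ?_
  ext w
  rcases hgh.exists_apply_eq_of_range z with ⟨x, rfl⟩ | ⟨y, rfl⟩ <;>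
    rcases hgh.exists_apply_eq_of_range w with ⟨x', rfl⟩ | ⟨y', rfl⟩
  · simp [part_glue_left, mem_part_comap]
  · simp [part_glue_left, hν, Set.disjoint_range_iff.1 hgh.disjoint]
  · simp [part_glue_right, ν.mem_part_comm, hν, (Set.disjoint_range_iff.1 hgh.disjoint _ _).symm]
  · simp [part_glue_right, mem_part_comap]

lemma prod_glue {M : Type*} [CommMonoid M] (w : ℕ → M) :
    ∏ B ∈ (glue hgh P Q).parts, w #B = (∏ B ∈ P.parts, w #B) * ∏ B ∈ Q.parts, w #B := by
  rw [glue, ofExistsUnique_parts, prod_union, prod_map, prod_map]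
  · simp
  · simp only [disjoint_left, mem_map, RelEmbedding.coe_toEmbedding, mapEmbedding_apply]
    rintro _ ⟨B, hB, rfl⟩ ⟨C, -, hCB⟩
    obtain ⟨x, hx⟩ := P.nonempty_of_mem_parts hB
    obtain ⟨y, -, hy⟩ := mem_map.1 (hCB ▸ mem_map_of_mem g hx)
    exact Set.disjoint_range_iff.1 hgh.disjoint x y hy.symm

end Glue

end Finpartition

instance {n : ℕ} : DecidablePred (@IsNonCrossing n) :=
  fun ν => by unfold IsNonCrossing; infer_instance

instance {n k : ℕ} : DecidablePred (@FirstTogether n k) :=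
  fun ν => by unfold FirstTogether; infer_instance

section NonCrossing

variable {a b m : ℕ}

lemma isNonCrossing_iff_part {ν : Finpartition (univ : Finset (Fin m))} :
    IsNonCrossing ν ↔ ∀ i j k l, i < j → j < k → k < l →
      k ∈ ν.part i → l ∈ ν.part j → j ∈ ν.part i := by
  have hpart : ∀ i, ν.part i ∈ ν.parts := fun i => ν.part_mem.2 (mem_univ i)
  have hself : ∀ i, i ∈ ν.part i := fun i => ν.mem_part (mem_univ i)
  constructor
  · intro hν i j k l hij hjk hkl hk hl
    by_contra hji
    exact hν _ (hpart i) _ (hpart j) (fun hij => hji (hij ▸ hself j)) i (hself i) k hk j (hself j)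
      l hl hij hjk hkl
  · intro hν B hB C hC hBC i hi k hk j hj l hl hij hjk hkl
    rw [← ν.part_eq_of_mem hB hi] at hk
    rw [← ν.part_eq_of_mem hC hj] at hl
    exact hBC (ν.eq_of_mem_parts hB hC (ν.part_eq_of_mem hB hi ▸ hν i j k l hij hjk hkl hk hl) hj)

lemma IsNonCrossing.comap {ν : Finpartition (univ : Finset (Fin m))} (hν : IsNonCrossing ν)
    {f : Fin a → Fin m} (hf : StrictMono f) : IsNonCrossing (ν.comap f) := by
  rw [isNonCrossing_iff_part] at hν ⊢
  simp only [Finpartition.mem_part_comap]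
  exact fun i j k l hij hjk hkl => hν _ _ _ _ (hf hij) (hf hjk) (hf hkl)

variable {g : Fin a ↪ Fin m} {h : Fin b ↪ Fin m}

lemma IsNonCrossing.glue (hg : StrictMono g) (hh : StrictMono h)
    (hgh : IsCompl (Set.range g) (Set.range h)) (hconv : (Set.range g).OrdConnected)
    {P : Finpartition (univ : Finset (Fin a))} {Q : Finpartition (univ : Finset (Fin b))}
    (hP : IsNonCrossing P) (hQ : IsNonCrossing Q) :
    IsNonCrossing (Finpartition.glue hgh P Q) := by
  rw [isNonCrossing_iff_part] at hP hQ ⊢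
  have hne := Set.disjoint_range_iff.1 hgh.disjoint
  intro i j k l hij hjk hkl hk hl
  rcases hgh.exists_apply_eq_of_range i with ⟨x, rfl⟩ | ⟨y, rfl⟩ <;>
    rcases hgh.exists_apply_eq_of_range j with ⟨x', rfl⟩ | ⟨y', rfl⟩ <;>
    simp only [Finpartition.part_glue_left, Finpartition.part_glue_right, mem_map] at hk hl ⊢
  · obtain ⟨x₂, hx₂, rfl⟩ := hk
    obtain ⟨x₃, hx₃, rfl⟩ := hl
    exact ⟨x', hP _ _ _ _ (hg.lt_iff_lt.1 hij) (hg.lt_iff_lt.1 hjk) (hg.lt_iff_lt.1 hkl) hx₂ hx₃,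
      rfl⟩
  · obtain ⟨x₂, -, rfl⟩ := hk
    obtain ⟨x'', hx''⟩ := hconv.out ⟨x, rfl⟩ ⟨x₂, rfl⟩ ⟨hij.le, hjk.le⟩
    exact absurd hx'' (hne _ _)
  · obtain ⟨y₂, -, rfl⟩ := hk
    obtain ⟨x₃, -, rfl⟩ := hl
    obtain ⟨x'', hx''⟩ := hconv.out ⟨x', rfl⟩ ⟨x₃, rfl⟩ ⟨hjk.le, hkl.le⟩
    exact absurd hx'' (hne _ _)
  · obtain ⟨y₂, hy₂, rfl⟩ := hk
    obtain ⟨y₃, hy₃, rfl⟩ := hl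
    exact ⟨y', hQ _ _ _ _ (hh.lt_iff_lt.1 hij) (hh.lt_iff_lt.1 hjk) (hh.lt_iff_lt.1 hkl) hy₂ hy₃,
      rfl⟩

def ncPartitions (m : ℕ) : Finset (Finpartition (univ : Finset (Fin m))) :=
  {ν | IsNonCrossing ν}

def ncPartitionsFirst (k m : ℕ) : Finset (Finpartition (univ : Finset (Fin m))) :=
  {ν | IsNonCrossing ν ∧ FirstTogether k ν}

lemma sum_ncPartitions_zero {M : Type*} [CommSemiring M] (w : ℕ → M) :
    ∑ ν ∈ ncPartitions 0, ∏ B ∈ ν.parts, w #B = 1 := by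
  have hparts (ν : Finpartition (univ : Finset (Fin 0))) : ν.parts = ∅ :=
    ν.parts_eq_empty_iff.2 (by simp)
  have : ncPartitions 0 = {⊥} := eq_singleton_iff_unique_mem.2
    ⟨by simp [ncPartitions, IsNonCrossing, hparts], fun ν _ => Finpartition.ext (by simp [hparts])⟩
  simp [this, hparts]

lemma sum_ncPartitionsFirst_succ_self {M : Type*} [CommSemiring M] (w : ℕ → M) {k : ℕ}
    (hk : 0 < k) : ∑ ν ∈ ncPartitionsFirst (k + 1) k, ∏ B ∈ ν.parts, w #B = w k := by
  have hne : (univ : Finset (Fin k)) ≠ ⊥ := ne_empty_of_mem (mem_univ ⟨0, hk⟩)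
  have : ncPartitionsFirst (k + 1) k = {Finpartition.indiscrete hne} := by
    refine eq_singleton_iff_unique_mem.2 ⟨?_, fun ν hν => Finpartition.ext ?_⟩
    · simp only [ncPartitionsFirst, mem_filter, mem_univ, true_and]
      refine ⟨fun B hB C hC hBC => ?_, univ, by simp, fun z _ => mem_univ z⟩
      simp only [Finpartition.indiscrete_parts, mem_singleton] at hB hC
      exact absurd (hB.trans hC.symm) hBC
    · obtain ⟨B, hB, hBall⟩ := (mem_filter.1 hν).2.2
      have hBuniv : B = univ := eq_univ_of_forall fun z => hBall z (by omega)
      simp only [Finpartition.indiscrete_parts, eq_singleton_iff_unique_mem]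
      refine ⟨hBuniv ▸ hB, fun C hC => ?_⟩
      obtain ⟨z, hz⟩ := ν.nonempty_of_mem_parts hC
      rw [← hBuniv]
      exact ν.eq_of_mem_parts hC hB hz (hBuniv ▸ mem_univ z)
  simp [this]

/-- Gluing is a bijection from `NC(a) × S` onto the partitions summed on the left, and block
products are multiplicative under gluing. -/
theorem sum_ncPartitions_split_eq_mul {M : Type*} [CommSemiring M] (w : ℕ → M) (hg : StrictMono g)
    (hh : StrictMono h) (hgh : IsCompl (Set.range g) (Set.range h))
    (hconv : (Set.range g).OrdConnected) (S : Finset (Finpartition (univ : Finset (Fin b))))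
    (hS : ∀ Q ∈ S, IsNonCrossing Q) :
    ∑ ν ∈ ncPartitions m with (∀ x y, h y ∉ ν.part (g x)) ∧ ν.comap h ∈ S, ∏ B ∈ ν.parts, w #B =
      (∑ P ∈ ncPartitions a, ∏ B ∈ P.parts, w #B) * ∑ Q ∈ S, ∏ B ∈ Q.parts, w #B := by
  rw [sum_mul_sum, ← sum_product']
  symm
  refine sum_nbij' (fun p => Finpartition.glue hgh p.1 p.2) (fun ν => (ν.comap g, ν.comap h))
    ?_ ?_ ?_ ?_ ?_
  · rintro ⟨P, Q⟩ hPQ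
    simp only [mem_product, ncPartitions, mem_filter, mem_univ, true_and] at hPQ ⊢
    refine ⟨hPQ.1.glue hg hh hgh hconv (hS Q hPQ.2), fun x y hxy => ?_,
      (Finpartition.comap_glue_right hgh P Q).symm ▸ hPQ.2⟩
    rw [Finpartition.part_glue_left] at hxy
    obtain ⟨x', -, hx'⟩ := mem_map.1 hxy
    exact Set.disjoint_range_iff.1 hgh.disjoint x' y hx'
  · intro ν hν
    simp only [mem_product, ncPartitions, mem_filter, mem_univ, true_and] at hν ⊢
    exact ⟨hν.1.comap hg, hν.2.2⟩
  · rintro ⟨P, Q⟩ -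
    simp only [Finpartition.comap_glue_left, Finpartition.comap_glue_right]
  · intro ν hν
    exact Finpartition.glue_comap hgh (mem_filter.1 hν).2.1
  · rintro ⟨P, Q⟩ -
    exact (Finpartition.prod_glue hgh P Q w).symm

end NonCrossing

lemma firstTogether_iff_mem_part {m k : ℕ} {ν : Finpartition (univ : Finset (Fin m))} {r : Fin m}
    (hr : (r : ℕ) < k) : FirstTogether k ν ↔ ∀ z : Fin m, (z : ℕ) < k → z ∈ ν.part r := by
  constructor
  · rintro ⟨B, hB, hBk⟩
    rwa [ν.part_eq_of_mem hB (hBk r hr)]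
  · exact fun h => ⟨ν.part r, ν.part_mem.2 (mem_univ r), h⟩

/-- The least `j` with `k + j` in the block of `r`; the alternative `m ≤ k + j` makes it
`m - k` when there is none. -/
def firstReturn {m : ℕ} (k : ℕ) (r : Fin m) (ν : Finpartition (univ : Finset (Fin m))) : ℕ :=
  Nat.find (⟨m, Or.inl le_add_self⟩ : ∃ j, m ≤ k + j ∨ ∃ z ∈ ν.part r, (z : ℕ) = k + j)

lemma firstReturn_le {m k : ℕ} (r : Fin m) (ν : Finpartition (univ : Finset (Fin m))) :
    firstReturn k r ν ≤ m - k :=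
  Nat.find_le (Or.inl (by omega))

lemma firstReturn_eq_iff {m k i : ℕ} {r : Fin m} {ν : Finpartition (univ : Finset (Fin m))} :
    firstReturn k r ν = i ↔ (m ≤ k + i ∨ ∃ z ∈ ν.part r, (z : ℕ) = k + i) ∧
      ∀ j < i, k + j < m ∧ ∀ z ∈ ν.part r, (z : ℕ) ≠ k + j := by
  rw [firstReturn, Nat.find_eq_iff]
  push Not
  rfl

section Embeddings

variable {n k i : ℕ}

def innerEmb (k : ℕ) (hi : i ≤ n) : Fin i ↪ Fin (n + k) :=
  ⟨fun x => ⟨k + x, by omega⟩, fun x y hxy => Fin.ext (by simpa using hxy)⟩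

def outerEmb (k : ℕ) (hi : i ≤ n) : Fin (k + n - i) ↪ Fin (n + k) :=
  ⟨fun y => ⟨if (y : ℕ) < k then y else y + i, by split_ifs <;> omega⟩, fun x y hxy => by
    simp only [Fin.mk.injEq] at hxy
    ext
    split_ifs at hxy <;> omega⟩

variable (hi : i ≤ n)

@[simp] lemma innerEmb_val (x : Fin i) : (innerEmb k hi x : ℕ) = k + x := rfl

@[simp] lemma outerEmb_val (y : Fin (k + n - i)) :
    (outerEmb k hi y : ℕ) = if (y : ℕ) < k then (y : ℕ) else y + i := rfl

lemma mem_range_innerEmb (z : Fin (n + k)) :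
    z ∈ Set.range (innerEmb k hi) ↔ k ≤ z ∧ (z : ℕ) < k + i := by
  constructor
  · rintro ⟨x, rfl⟩
    simp
  · exact fun hz => ⟨⟨z - k, by omega⟩, Fin.ext (by simp; omega)⟩

lemma mem_range_outerEmb (z : Fin (n + k)) :
    z ∈ Set.range (outerEmb k hi) ↔ (z : ℕ) < k ∨ k + i ≤ z := by
  constructor
  · rintro ⟨y, rfl⟩
    simp only [outerEmb_val]
    split_ifs <;> omega
  · rintro (hz | hz)
    · exact ⟨⟨z, by omega⟩, Fin.ext (by simp only [outerEmb_val]; rw [if_pos hz])⟩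
    · exact ⟨⟨z - i, by omega⟩, Fin.ext (by simp only [outerEmb_val]; split_ifs <;> omega)⟩

lemma strictMono_innerEmb : StrictMono (innerEmb k hi) :=
  fun x y hxy => by
    rw [Fin.lt_def] at hxy ⊢
    simp only [innerEmb_val]
    omega

lemma strictMono_outerEmb : StrictMono (outerEmb k hi) := by
  intro x y hxy
  simp only [Fin.lt_def, outerEmb_val] at hxy ⊢
  split_ifs <;> omega

lemma isCompl_range_innerEmb_outerEmb :
    IsCompl (Set.range (innerEmb k hi)) (Set.range (outerEmb k hi)) :=
  compl_eq_iff_isCompl.1 <| Set.ext fun z => by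
    simp only [Set.mem_compl_iff, mem_range_innerEmb, mem_range_outerEmb]
    omega

lemma ordConnected_range_innerEmb : (Set.range (innerEmb k hi)).OrdConnected :=
  ⟨fun x hx y hy z hz => by
    rw [mem_range_innerEmb] at hx hy ⊢
    rw [Set.mem_Icc, Fin.le_def, Fin.le_def] at hz
    omega⟩

end Embeddings

section Decomposition

variable {n k i : ℕ} {ν : Finpartition (univ : Finset (Fin (n + k)))} {r : Fin (n + k)}

lemma firstTogether_comap_outerEmb_iff (hi : i ≤ n) (hr : (r : ℕ) < k) :
    FirstTogether (k + 1) (ν.comap (outerEmb k hi)) ↔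
      FirstTogether k ν ∧ (n + k ≤ k + i ∨ ∃ z ∈ ν.part r, (z : ℕ) = k + i) := by
  have hroot : outerEmb k hi ⟨r, by omega⟩ = r := Fin.ext (by simp [hr])
  rw [firstTogether_iff_mem_part (r := ⟨r, by omega⟩) (by simp; omega),
    firstTogether_iff_mem_part hr]
  simp only [Finpartition.mem_part_comap, hroot]
  constructor
  · intro h
    refine ⟨fun z hz => ?_, ?_⟩
    · convert h ⟨z, by omega⟩ (by simp; omega)
      exact Fin.ext (by simp [hz])
    · by_cases hin : n ≤ i
      · exact Or.inl (by omega)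
      · exact Or.inr ⟨_, h ⟨k, by omega⟩ (by simp), by simp⟩
  · rintro ⟨h, hret⟩ y hy
    by_cases hyk : (y : ℕ) < k
    · exact h _ (by simp [hyk])
    · obtain ⟨z, hz, hzv⟩ := hret.resolve_left (by omega)
      convert hz
      exact Fin.ext (by simp [hyk, hzv]; omega)

lemma outerEmb_not_mem_part_innerEmb (hi : i ≤ n) (hr : (r : ℕ) < k) (hν : IsNonCrossing ν)
    (hFT : ∀ z : Fin (n + k), (z : ℕ) < k → z ∈ ν.part r)
    (hret : n + k ≤ k + i ∨ ∃ z ∈ ν.part r, (z : ℕ) = k + i)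
    (hbefore : ∀ j < i, ∀ z ∈ ν.part r, (z : ℕ) ≠ k + j) (x : Fin i) (y : Fin (k + n - i)) :
    outerEmb k hi y ∉ ν.part (innerEmb k hi x) := by
  intro hy
  refine hbefore x x.isLt (innerEmb k hi x) ?_ rfl
  have of_root : outerEmb k hi y ∈ ν.part r → innerEmb k hi x ∈ ν.part r :=
    ν.mem_part_trans (ν.mem_part_comm.1 hy)
  have hyv := outerEmb_val hi y
  have hylt := (outerEmb k hi y).isLt
  by_cases hyk : (y : ℕ) < k
  · exact of_root (hFT _ (by simp [hyk]))
  rw [if_neg hyk] at hyv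
  obtain ⟨z, hz, hzv⟩ := hret.resolve_left (by omega)
  by_cases hyz : outerEmb k hi y = z
  · exact of_root (hyz ▸ hz)
  -- the blocks of `r ∋ z` and of `innerEmb x ∋ outerEmb y` cross unless they coincide
  have hyz' : (outerEmb k hi y : ℕ) ≠ z := fun h => hyz (Fin.ext h)
  refine isNonCrossing_iff_part.1 hν r _ z _ ?_ ?_ ?_ hz hy
  · simp only [Fin.lt_def, innerEmb_val]; omega
  · simp only [Fin.lt_def, innerEmb_val]; omega
  · rw [Fin.lt_def]
    omega

lemma firstTogether_and_firstReturn_eq_iff (hi : i ≤ n) (hr : (r : ℕ) < k) (hν : IsNonCrossing ν) :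
    FirstTogether k ν ∧ firstReturn k r ν = i ↔
      (∀ x y, outerEmb k hi y ∉ ν.part (innerEmb k hi x)) ∧
        FirstTogether (k + 1) (ν.comap (outerEmb k hi)) := by
  rw [firstTogether_comap_outerEmb_iff hi hr, firstReturn_eq_iff, firstTogether_iff_mem_part hr]
  constructor
  · rintro ⟨hFT, hret, hbefore⟩
    exact ⟨outerEmb_not_mem_part_innerEmb hi hr hν hFT hret fun j hj => (hbefore j hj).2,
      hFT, hret⟩
  · rintro ⟨hsplit, hFT, hret⟩
    refine ⟨hFT, hret, fun j hj => ⟨by omega, fun z hz hzj => ?_⟩⟩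
    have hzinner : z = innerEmb k hi ⟨j, hj⟩ := Fin.ext (by simp [hzj])
    have hroot : outerEmb k hi ⟨r, by omega⟩ = r := Fin.ext (by simp [hr])
    exact hsplit ⟨j, hj⟩ ⟨r, by omega⟩ (hroot ▸ hzinner ▸ ν.mem_part_comm.1 hz)

lemma filter_firstReturn_eq (hi : i ≤ n) (hr : (r : ℕ) < k) :
    {ν ∈ ncPartitionsFirst k (n + k) | firstReturn k r ν = i} =
      {ν ∈ ncPartitions (n + k) | (∀ x y, outerEmb k hi y ∉ ν.part (innerEmb k hi x)) ∧
        ν.comap (outerEmb k hi) ∈ ncPartitionsFirst (k + 1) (k + n - i)} := by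
  ext ν
  simp only [ncPartitionsFirst, ncPartitions, mem_filter, mem_univ, true_and]
  by_cases hν : IsNonCrossing ν
  · simp only [hν, hν.comap (strictMono_outerEmb hi), true_and,
      firstTogether_and_firstReturn_eq_iff hi hr hν]
  · simp [hν]

theorem sum_filter_firstReturn_eq {M : Type*} [CommSemiring M] (w : ℕ → M)
    (hi : i ≤ n) (hr : (r : ℕ) < k) :
    ∑ ν ∈ ncPartitionsFirst k (n + k) with firstReturn k r ν = i, ∏ B ∈ ν.parts, w #B =
      (∑ P ∈ ncPartitions i, ∏ B ∈ P.parts, w #B) *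
        ∑ Q ∈ ncPartitionsFirst (k + 1) (k + n - i), ∏ B ∈ Q.parts, w #B := by
  rw [filter_firstReturn_eq hi hr]
  exact sum_ncPartitions_split_eq_mul w (strictMono_innerEmb hi) (strictMono_outerEmb hi)
    (isCompl_range_innerEmb_outerEmb hi) (ordConnected_range_innerEmb hi) _
    fun Q hQ => (mem_filter.1 hQ).2.1

end Decomposition

lemma ncSum_eq_sum {A : Type*} [Ring A] (R : (k : ℕ) → (Fin k → A) → ℂ) (Z : A) (k m : ℕ) :
    ncSum R Z k m = ∑ ν ∈ ncPartitionsFirst k m, ∏ B ∈ ν.parts, R #B fun _ => Z := by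
  rw [ncSum, finsum_eq_sum_of_fintype]
  exact (sum_subtype _ (fun ν => by simp [ncPartitionsFirst]) _).symm

lemma moment_eq_sum {A : Type*} [Ring A] [Algebra ℂ A] {τ : A →ₗ[ℂ] ℂ} (hτ1 : τ 1 = 1)
    {R : (k : ℕ) → (Fin k → A) → ℂ} (hR : MomentCumulant τ R) (Z : A) (i : ℕ) :
    τ (Z ^ i) = ∑ ν ∈ ncPartitions i, ∏ B ∈ ν.parts, R #B fun _ => Z := by
  rcases i.eq_zero_or_pos with rfl | hi
  · rw [sum_ncPartitions_zero (fun j => R j fun _ => Z), pow_zero, hτ1]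
  · rw [← List.prod_replicate, ← List.ofFn_const, hR i hi, finsum_eq_sum_of_fintype]
    exact (sum_subtype _ (fun ν => by simp [ncPartitions]) _).symm

theorem stmt1_general {A : Type*} [Ring A] [Algebra ℂ A]
    (τ : A →ₗ[ℂ] ℂ) (hτ1 : τ 1 = 1)
    (R : (k : ℕ) → (Fin k → A) → ℂ) (hR : MomentCumulant τ R)
    (Z : A) (n k : ℕ) (hk : 1 ≤ k) :
    ncSum R Z k (n + k) =
      (∑ i ∈ Finset.range n, τ (Z ^ i) * ncSum R Z (k + 1) (k + n - i))
        + R k (fun _ => Z) * τ (Z ^ n) := by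
  let root : Fin (n + k) := ⟨0, by omega⟩
  have fiber (i : ℕ) (hi : i ≤ n) :
      ∑ ν ∈ ncPartitionsFirst k (n + k) with firstReturn k root ν = i,
          ∏ B ∈ ν.parts, R #B (fun _ => Z) = τ (Z ^ i) * ncSum R Z (k + 1) (k + n - i) := by
    rw [sum_filter_firstReturn_eq (fun j => R j fun _ => Z) hi hk, moment_eq_sum hτ1 hR,
      ncSum_eq_sum]
  rw [ncSum_eq_sum, ← sum_fiberwise_of_maps_to (g := firstReturn k root) (t := range (n + 1))
      fun ν _ => mem_range.2 (Nat.lt_succ_of_le (firstReturn_le root ν |>.trans (by omega))),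
    sum_range_succ, sum_congr rfl fun i hi => fiber i (mem_range.1 hi).le, fiber n le_rfl,
    Nat.add_sub_cancel, ncSum_eq_sum, sum_ncPartitionsFirst_succ_self (fun j => R j fun _ => Z) hk,
    mul_comm]

/-- Lemma 2.2. For an element `Z` of a complex unital algebra
with a linear functional `τ` satisfying `τ(1) = 1`, with moments `mᵢ = τ(Zⁱ)`
and free cumulants `R`, for all `n, k ≥ 1`:
`Σ_{ν ∈ NC^k(n+k)} R_ν(Z) = Σ_{i=0}^{n-1} mᵢ Σ_{ν ∈ NC^{k+1}(k+n-i)} R_ν(Z) + R_k(Z) mₙ`. -/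
theorem stmt1 {A : Type*} [Ring A] [Algebra ℂ A]
    (τ : A →ₗ[ℂ] ℂ) (hτ1 : τ 1 = 1)
    (R : (k : ℕ) → (Fin k → A) → ℂ) (hR : MomentCumulant τ R)
    (Z : A) (n k : ℕ) (hn : 1 ≤ n) (hk : 1 ≤ k) :
    ncSum R Z k (n + k) =
      (∑ i ∈ Finset.range n, τ (Z ^ i) * ncSum R Z (k + 1) (k + n - i))
        + R k (fun _ => Z) * τ (Z ^ n) :=
  stmt1_general τ hτ1 R hR Z n k hk
end

section
/- Let X, Y be freely independent self-adjoint centered elements of a von Neumann algebra with normal faithful tracial state τ, and let α, β > 0. Then β R_k(X) = α R_k(Y) for all k ≥ 1 if and only if τ(X | X + Y) = (α/(α+β)) (X + Y). -/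
/-- A (von Neumann algebra style) normal faithful tracial state on a complex
star algebra with a (weak-*) topology. -/
structure TracialState (A : Type*) [Ring A] [Algebra ℂ A] [StarRing A]
    [TopologicalSpace A] where
  τ : A →ₗ[ℂ] ℂ
  map_one : τ 1 = 1
  tracial : ∀ x y : A, τ (x * y) = τ (y * x)
  pos : ∀ x : A, 0 ≤ (τ (star x * x)).re ∧ (τ (star x * x)).im = 0
  faithful : ∀ x : A, τ (star x * x) = 0 → x = 0
  normal : ∀ z : A, Continuous fun y : A => τ (z * y)

/-- The (von Neumann) subalgebra generated by `V` and the identity: the closure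
of the unital algebra generated by `V`. -/
def vnGen {A : Type*} [Ring A] [Algebra ℂ A] [TopologicalSpace A] (V : A) : Set A :=
  closure ((Algebra.adjoin ℂ ({V} : Set A) : Subalgebra ℂ A) : Set A)

/-- `W` is the conditional expectation `τ(U | V)` of `U` onto the von Neumann
subalgebra generated by `V` and the identity: `W` belongs to that subalgebra and
`τ(U Y) = τ(W Y)` for every `Y` in it. -/
def IsCondExp {A : Type*} [Ring A] [Algebra ℂ A] [TopologicalSpace A]
    (τ : A →ₗ[ℂ] ℂ) (V U W : A) : Prop :=
  W ∈ vnGen V ∧ ∀ Y ∈ vnGen V, τ (U * Y) = τ (W * Y)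

section AuxStmt6

open Finset

variable {A : Type*} [Ring A]

/-- abbreviation for the type of non-crossing partitions. -/
abbrev NCP (n : ℕ) := {ν : Finpartition (Finset.univ : Finset (Fin n)) // IsNonCrossing ν}

noncomputable instance {n : ℕ} : Fintype (NCP n) := Fintype.ofFinite _

lemma Rconst_congr (R : (k : ℕ) → (Fin k → A) → ℂ) (x : A) {k k' : ℕ} (h : k = k') :
    R k (fun _ => x) = R k' (fun _ => x) := by subst h; rfl

/-- the word function attached to a boolean word. -/
def wordFn (X Y : A) {n : ℕ} (w : Fin n → Bool) : Fin n → A :=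
  fun i => cond (w i) X Y

/-- the product of the word. -/
noncomputable def wp (X Y : A) {n : ℕ} (w : Fin n → Bool) : A :=
  (List.ofFn (wordFn X Y w)).prod

lemma wp_cons (X Y : A) {n : ℕ} (b : Bool) (t : Fin n → Bool) :
    wp X Y (Fin.cons b t) = cond b X Y * wp X Y t := by
  rw [wp, List.ofFn_succ, List.prod_cons, wp]
  simp only [wordFn, Fin.cons_zero, Fin.cons_succ]
  rfl

lemma sum_pi_succ {M : Type*} [AddCommMonoid M] {n : ℕ} (f : (Fin (n + 1) → Bool) → M) :
    ∑ w : Fin (n + 1) → Bool, f w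
      = (∑ t : Fin n → Bool, f (Fin.cons true t))
        + ∑ t : Fin n → Bool, f (Fin.cons false t) := by
  rw [← Equiv.sum_comp (Fin.consEquiv (fun _ => Bool)) f, Fintype.sum_prod_type]
  simp [Fin.consEquiv, Fintype.sum_bool]

lemma pow_expand (X Y : A) : ∀ n : ℕ, (X + Y) ^ n = ∑ w : Fin n → Bool, wp X Y w
  | 0 => by
    rw [pow_zero, Fintype.sum_unique]
    simp [wp, List.ofFn_zero]
  | (n + 1) => by
    rw [pow_succ', pow_expand X Y n, Finset.mul_sum, sum_pi_succ (f := fun w => wp X Y w)]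
    simp only [wp_cons, Bool.cond_true, Bool.cond_false, add_mul, Finset.sum_add_distrib]

lemma X_mul_pow (X Y : A) (m : ℕ) :
    X * (X + Y) ^ m = ∑ t : Fin m → Bool, wp X Y (Fin.cons true t) := by
  rw [pow_expand, Finset.mul_sum]
  simp only [wp_cons, Bool.cond_true]

lemma Y_mul_pow (X Y : A) (m : ℕ) :
    Y * (X + Y) ^ m = ∑ t : Fin m → Bool, wp X Y (Fin.cons false t) := by
  rw [pow_expand, Finset.mul_sum]
  simp only [wp_cons, Bool.cond_false]

/-- inner sums over words starting with a fixed letter. -/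
noncomputable def Ssum (R : (k : ℕ) → (Fin k → A) → ℂ) (X Y : A) (m : ℕ) (b : Bool)
    (ν : Finpartition (Finset.univ : Finset (Fin (m + 1)))) : ℂ :=
  ∑ t : Fin m → Bool, partCum R (wordFn X Y (Fin.cons b t)) ν

end AuxStmt6

section AuxStmt6b

open Finset

variable {A : Type*} [Ring A] [Algebra ℂ A]

lemma tau_word (τ : A →ₗ[ℂ] ℂ) (R : (k : ℕ) → (Fin k → A) → ℂ)
    (hR : MomentCumulant τ R) (X Y : A) {m : ℕ} (w : Fin (m + 1) → Bool) :
    τ (wp X Y w) = ∑ ν : NCP (m + 1), partCum R (wordFn X Y w) ν.1 := by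
  have h := hR (m + 1) (Nat.succ_pos m) (wordFn X Y w)
  rw [finsum_eq_sum_of_fintype] at h
  exact h

lemma tau_X_mul (τ : A →ₗ[ℂ] ℂ) (R : (k : ℕ) → (Fin k → A) → ℂ)
    (hR : MomentCumulant τ R) (X Y : A) (m : ℕ) :
    τ (X * (X + Y) ^ m) = ∑ ν : NCP (m + 1), Ssum R X Y m true ν.1 := by
  calc τ (X * (X + Y) ^ m) = ∑ t : Fin m → Bool, τ (wp X Y (Fin.cons true t)) := by
        rw [X_mul_pow, map_sum]
    _ = ∑ t : Fin m → Bool, ∑ ν : NCP (m + 1), partCum R (wordFn X Y (Fin.cons true t)) ν.1 :=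
        Finset.sum_congr rfl fun t _ => tau_word τ R hR X Y _
    _ = ∑ ν : NCP (m + 1), Ssum R X Y m true ν.1 := by rw [Finset.sum_comm]; rfl

lemma tau_Y_mul (τ : A →ₗ[ℂ] ℂ) (R : (k : ℕ) → (Fin k → A) → ℂ)
    (hR : MomentCumulant τ R) (X Y : A) (m : ℕ) :
    τ (Y * (X + Y) ^ m) = ∑ ν : NCP (m + 1), Ssum R X Y m false ν.1 := by
  calc τ (Y * (X + Y) ^ m) = ∑ t : Fin m → Bool, τ (wp X Y (Fin.cons false t)) := by
        rw [Y_mul_pow, map_sum]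
    _ = ∑ t : Fin m → Bool, ∑ ν : NCP (m + 1), partCum R (wordFn X Y (Fin.cons false t)) ν.1 :=
        Finset.sum_congr rfl fun t _ => tau_word τ R hR X Y _
    _ = ∑ ν : NCP (m + 1), Ssum R X Y m false ν.1 := by rw [Finset.sum_comm]; rfl

end AuxStmt6b
section AuxStmt6c

open Finset

variable {A : Type*} [Ring A]

lemma orderIso_surj {n : ℕ} (B : Finset (Fin n)) (x : Fin n) (hx : x ∈ B) :
    ∃ i : Fin B.card, ((B.orderIsoOfFin rfl i : {y // y ∈ B}) : Fin n) = x :=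
  ⟨(B.orderIsoOfFin rfl).symm ⟨x, hx⟩, by rw [OrderIso.apply_symm_apply]⟩

lemma partCum_eq_zero (R : (k : ℕ) → (Fin k → A) → ℂ) (X Y : A)
    (hfree : FreeIndep R X Y) (hxy : X ≠ Y) {n : ℕ}
    (ν : Finpartition (Finset.univ : Finset (Fin n))) {B : Finset (Fin n)}
    (hB : B ∈ ν.parts) (u : Fin n → Bool) {j0 j1 : Fin n} (hj0 : j0 ∈ B) (hj1 : j1 ∈ B)
    (h0 : u j0 = true) (h1 : u j1 = false) :
    partCum R (wordFn X Y u) ν = 0 := by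
  rw [partCum]
  apply Finset.prod_eq_zero hB
  apply hfree
  · intro i
    cases hb : u ((B.orderIsoOfFin rfl i : {y // y ∈ B}) : Fin n)
    · right; simp only [wordFn, hb, Bool.cond_false]
    · left; simp only [wordFn, hb, Bool.cond_true]
  · obtain ⟨i0, hi0⟩ := orderIso_surj B j0 hj0
    obtain ⟨i1, hi1⟩ := orderIso_surj B j1 hj1
    refine ⟨i0, i1, ?_⟩
    simp only [wordFn, hi0, hi1, h0, h1]
    simpa using hxy

lemma key_ratio (R : (k : ℕ) → (Fin k → A) → ℂ) (X Y : A) (hfree : FreeIndep R X Y)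
    (a b : ℂ) {m : ℕ} (ν : Finpartition (Finset.univ : Finset (Fin (m + 1))))
    {B₀ : Finset (Fin (m + 1))} (hB₀ : B₀ ∈ ν.parts) (h0 : (0 : Fin (m + 1)) ∈ B₀)
    (hcard : b * R B₀.card (fun _ => X) = a * R B₀.card (fun _ => Y)) :
    b * Ssum R X Y m true ν = a * Ssum R X Y m false ν := by
  classical
  set σ : (Fin m → Bool) → (Fin m → Bool) :=
    fun t i => if (i.succ : Fin (m + 1)) ∈ B₀ then !(t i) else t i with hσdef
  have hσ : Function.Involutive σ := by
    intro t; funext i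
    by_cases h : (i.succ : Fin (m + 1)) ∈ B₀ <;> simp [hσdef, h]
  have hre : ∑ t : Fin m → Bool, partCum R (wordFn X Y (Fin.cons false (σ t))) ν
      = Ssum R X Y m false ν :=
    Fintype.sum_bijective σ hσ.bijective _ _ (fun t => rfl)
  rw [← hre, Ssum, Finset.mul_sum, Finset.mul_sum]
  refine Finset.sum_congr rfl fun t _ => ?_
  set w : Fin (m + 1) → Bool := Fin.cons true t with hwdef
  set w' : Fin (m + 1) → Bool := Fin.cons false (σ t) with hw'def
  have hw' : ∀ j, w' j = if j ∈ B₀ then !(w j) else w j := by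
    intro j
    refine Fin.cases ?_ (fun i => ?_) j
    · simp [hwdef, hw'def, h0]
    · simp only [hwdef, hw'def, hσdef, Fin.cons_succ]
  have h00 : w 0 = true := by simp [hwdef]
  have h0' : w' 0 = false := by simp [hw'def]
  by_cases hxy : X = Y
  · subst hxy
    have hwf : ∀ u : Fin (m + 1) → Bool, wordFn X X u = fun _ => X := by
      intro u; funext j; simp only [wordFn, Bool.cond_self]
    rw [hwf, hwf]
    by_cases h0R : R B₀.card (fun _ => X) = 0
    · have hz : partCum R (fun _ : Fin (m + 1) => X) ν = 0 := by
        rw [partCum]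
        exact Finset.prod_eq_zero hB₀ h0R
      rw [hz, mul_zero, mul_zero]
    · have hba : b = a := mul_right_cancel₀ h0R hcard
      rw [hba]
  · by_cases hmono : ∀ j ∈ B₀, w j = true
    · have hwB : ∀ x ∈ B₀, w' x = false := by
        intro x hx; rw [hw' x, if_pos hx, hmono x hx]; rfl
      rw [partCum, partCum, ← Finset.mul_prod_erase _ _ hB₀, ← Finset.mul_prod_erase _ _ hB₀]
      have hrest : ∀ B ∈ ν.parts.erase B₀,
          R B.card (fun i => wordFn X Y w' ((B.orderIsoOfFin rfl i : {y // y ∈ B}) : Fin (m + 1)))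
            = R B.card (fun i => wordFn X Y w ((B.orderIsoOfFin rfl i : {y // y ∈ B}) : Fin (m + 1))) := by
        intro B hB
        have hBp := Finset.mem_of_mem_erase hB
        have hne := Finset.ne_of_mem_erase hB
        have hdisj : Disjoint B B₀ := ν.disjoint (Finset.mem_coe.2 hBp) (Finset.mem_coe.2 hB₀) hne
        congr 1; funext i
        have hx : (((B.orderIsoOfFin rfl i : {y // y ∈ B}) : Fin (m + 1))) ∉ B₀ :=
          Finset.disjoint_left.1 hdisj (B.orderIsoOfFin rfl i).2
        simp only [wordFn]
        rw [hw', if_neg hx]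
      rw [Finset.prod_congr rfl hrest]
      have hfw : (fun i => wordFn X Y w ((B₀.orderIsoOfFin rfl i : {y // y ∈ B₀}) : Fin (m + 1)))
          = fun _ => X := by
        funext i; simp only [wordFn]
        rw [hmono _ (B₀.orderIsoOfFin rfl i).2]; rfl
      have hfw' : (fun i => wordFn X Y w' ((B₀.orderIsoOfFin rfl i : {y // y ∈ B₀}) : Fin (m + 1)))
          = fun _ => Y := by
        funext i; simp only [wordFn]
        rw [hwB _ (B₀.orderIsoOfFin rfl i).2]; rfl
      rw [hfw, hfw', ← mul_assoc, ← mul_assoc, hcard]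
    · push_neg at hmono
      obtain ⟨j, hjB, hjf⟩ := hmono
      have hjf' : w j = false := by
        cases h : w j
        · rfl
        · exact absurd h hjf
      have hj' : w' j = true := by rw [hw' j, if_pos hjB, hjf']; rfl
      rw [partCum_eq_zero R X Y hfree hxy ν hB₀ w h0 hjB h00 hjf',
        partCum_eq_zero R X Y hfree hxy ν hB₀ w' hjB h0 hj' h0', mul_zero, mul_zero]

end AuxStmt6c
section AuxStmt6d

open Finset

variable {A : Type*} [Ring A]

/-- the one-block partition. -/
def fullP (m : ℕ) : Finpartition (Finset.univ : Finset (Fin (m + 1))) :=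
  Finpartition.indiscrete (by
    rw [Finset.bot_eq_empty]
    exact Finset.univ_nonempty.ne_empty)

lemma fullP_parts (m : ℕ) : (fullP m).parts = {Finset.univ} := rfl

lemma fullP_nc (m : ℕ) : IsNonCrossing (fullP m) := by
  intro B hB C hC hne
  rw [fullP_parts, Finset.mem_singleton] at hB hC
  exact absurd (hB.trans hC.symm) hne

lemma eq_fullP {m : ℕ} {ν : Finpartition (Finset.univ : Finset (Fin (m + 1)))}
    (h : Finset.univ ∈ ν.parts) : ν = fullP m := by
  have hparts : ν.parts = {Finset.univ} := by
    refine Finset.eq_singleton_iff_unique_mem.2 ⟨h, fun C hC => ?_⟩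
    obtain ⟨x, hx⟩ := ν.nonempty_of_mem_parts hC
    exact ν.eq_of_mem_parts hC h hx (Finset.mem_univ x)
  exact Finpartition.ext (by rw [hparts, fullP_parts])

lemma univ_mem_fullP (m : ℕ) : Finset.univ ∈ (fullP m).parts := by
  rw [fullP_parts]; exact Finset.mem_singleton_self _

lemma partCum_fullP_const (R : (k : ℕ) → (Fin k → A) → ℂ) (x : A) (m : ℕ) :
    partCum R (fun _ : Fin (m + 1) => x) (fullP m) = R (m + 1) (fun _ => x) := by
  rw [partCum, fullP_parts, Finset.prod_singleton]
  exact Rconst_congr R x (by simp)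

lemma Ssum_full_true (R : (k : ℕ) → (Fin k → A) → ℂ) (X Y : A)
    (hfree : FreeIndep R X Y) (hxy : X ≠ Y) (m : ℕ) :
    Ssum R X Y m true (fullP m) = R (m + 1) (fun _ => X) := by
  rw [Ssum, Finset.sum_eq_single_of_mem (fun _ => true) (Finset.mem_univ _)]
  · have hconst : Fin.cons true (fun _ : Fin m => true) = fun _ : Fin (m + 1) => true := by
      funext j; refine Fin.cases rfl (fun i => rfl) j
    have hw : wordFn X Y (Fin.cons true (fun _ : Fin m => true)) = fun _ : Fin (m + 1) => X := by
      funext j; simp only [wordFn, hconst]; rfl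
    rw [hw, partCum_fullP_const]
  · intro t _ htne
    have hne : ¬ ∀ i, t i = true := fun hc => htne (funext hc)
    push_neg at hne
    obtain ⟨i, hi⟩ := hne
    have hif : t i = false := by
      cases h : t i
      · rfl
      · exact absurd h hi
    exact partCum_eq_zero R X Y hfree hxy (fullP m) (univ_mem_fullP m)
      (Fin.cons true t) (Finset.mem_univ (0 : Fin (m + 1))) (Finset.mem_univ i.succ)
      (Fin.cons_zero _ _) (by rw [Fin.cons_succ]; exact hif)

lemma Ssum_full_false (R : (k : ℕ) → (Fin k → A) → ℂ) (X Y : A)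
    (hfree : FreeIndep R X Y) (hxy : X ≠ Y) (m : ℕ) :
    Ssum R X Y m false (fullP m) = R (m + 1) (fun _ => Y) := by
  rw [Ssum, Finset.sum_eq_single_of_mem (fun _ => false) (Finset.mem_univ _)]
  · have hconst : Fin.cons false (fun _ : Fin m => false) = fun _ : Fin (m + 1) => false := by
      funext j; refine Fin.cases rfl (fun i => rfl) j
    have hw : wordFn X Y (Fin.cons false (fun _ : Fin m => false)) = fun _ : Fin (m + 1) => Y := by
      funext j; simp only [wordFn, hconst]; rfl
    rw [hw, partCum_fullP_const]
  · intro t _ htne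
    have hne : ¬ ∀ i, t i = false := fun hc => htne (funext hc)
    push_neg at hne
    obtain ⟨i, hi⟩ := hne
    have hit : t i = true := by
      cases h : t i
      · exact absurd h hi
      · rfl
    exact partCum_eq_zero R X Y hfree hxy (fullP m) (univ_mem_fullP m)
      (Fin.cons false t) (Finset.mem_univ i.succ) (Finset.mem_univ (0 : Fin (m + 1)))
      (by rw [Fin.cons_succ]; exact hit) (Fin.cons_zero _ _)

end AuxStmt6d
section AuxStmt6e

open Finset

variable {A : Type*} [Ring A] [Algebra ℂ A]

lemma mom_ratio (τ : A →ₗ[ℂ] ℂ) (R : (k : ℕ) → (Fin k → A) → ℂ)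
    (hR : MomentCumulant τ R) (X Y : A) (hfree : FreeIndep R X Y) (a b : ℂ)
    (hcum : ∀ k, 1 ≤ k → b * R k (fun _ => X) = a * R k (fun _ => Y)) (m : ℕ) :
    b * τ (X * (X + Y) ^ m) = a * τ (Y * (X + Y) ^ m) := by
  rw [tau_X_mul τ R hR X Y m, tau_Y_mul τ R hR X Y m, Finset.mul_sum, Finset.mul_sum]
  refine Finset.sum_congr rfl fun ν _ => ?_
  obtain ⟨B₀, hB₀, h0⟩ := ν.1.exists_mem (Finset.mem_univ (0 : Fin (m + 1)))
  exact key_ratio R X Y hfree a b ν.1 hB₀ h0 (hcum _ (Finset.card_pos.2 ⟨0, h0⟩))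

lemma cum_ratio_of_mom (τ : A →ₗ[ℂ] ℂ) (R : (k : ℕ) → (Fin k → A) → ℂ)
    (hR : MomentCumulant τ R) (X Y : A) (hfree : FreeIndep R X Y) (hxy : X ≠ Y) (a b : ℂ)
    (hmom : ∀ m : ℕ, b * τ (X * (X + Y) ^ m) = a * τ (Y * (X + Y) ^ m)) :
    ∀ k, 1 ≤ k → b * R k (fun _ => X) = a * R k (fun _ => Y) := by
  suffices H : ∀ m : ℕ, b * R (m + 1) (fun _ => X) = a * R (m + 1) (fun _ => Y) by
    intro k hk
    cases k with
    | zero => omega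
    | succ m => exact H m
  intro m
  induction m using Nat.strong_induction_on with
  | _ m IH =>
  have hm := hmom m
  rw [tau_X_mul τ R hR X Y m, tau_Y_mul τ R hR X Y m, Finset.mul_sum, Finset.mul_sum] at hm
  have h2 : ∑ ν : NCP (m + 1),
      (b * Ssum R X Y m true ν.1 - a * Ssum R X Y m false ν.1) = 0 := by
    rw [Finset.sum_sub_distrib, hm, sub_self]
  rw [Finset.sum_eq_single_of_mem (⟨fullP m, fullP_nc m⟩ : NCP (m + 1))
    (Finset.mem_univ _) ?_] at h2
  · rw [Ssum_full_true R X Y hfree hxy m, Ssum_full_false R X Y hfree hxy m] at h2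
    exact sub_eq_zero.1 h2
  · intro ν _ hνne
    obtain ⟨B₀, hB₀, h0⟩ := ν.1.exists_mem (Finset.mem_univ (0 : Fin (m + 1)))
    have hBne : B₀ ≠ Finset.univ := by
      intro h
      exact hνne (Subtype.ext (eq_fullP (h ▸ hB₀)))
    have hlt : B₀.card < m + 1 := by
      have := Finset.card_lt_card
        (Finset.ssubset_iff_subset_ne.2 ⟨Finset.subset_univ _, hBne⟩)
      simpa using this
    have h1c : 1 ≤ B₀.card := Finset.card_pos.2 ⟨0, h0⟩
    have hcc : b * R B₀.card (fun _ => X) = a * R B₀.card (fun _ => Y) := by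
      obtain ⟨j, hj⟩ : ∃ j, B₀.card = j + 1 := ⟨B₀.card - 1, by omega⟩
      rw [Rconst_congr R X hj, Rconst_congr R Y hj]
      exact IH j (by omega)
    rw [key_ratio R X Y hfree a b ν.1 hB₀ h0 hcc, sub_self]

lemma cum_zero_of_moments (τ : A →ₗ[ℂ] ℂ) (R : (k : ℕ) → (Fin k → A) → ℂ)
    (hR : MomentCumulant τ R) (X : A)
    (hmom : ∀ n, 1 ≤ n → τ (X ^ n) = 0) :
    ∀ k, 1 ≤ k → R k (fun _ => X) = 0 := by
  suffices H : ∀ m : ℕ, R (m + 1) (fun _ => X) = 0 by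
    intro k hk
    cases k with
    | zero => omega
    | succ m => exact H m
  intro m
  induction m using Nat.strong_induction_on with
  | _ m IH =>
  have h := hR (m + 1) (Nat.succ_pos m) (fun _ => X)
  rw [finsum_eq_sum_of_fintype] at h
  have hLHS : (List.ofFn (fun _ : Fin (m + 1) => X)).prod = X ^ (m + 1) := by
    rw [List.ofFn_const, List.prod_replicate]
  rw [hLHS, hmom (m + 1) (Nat.succ_le_succ (Nat.zero_le m))] at h
  rw [Finset.sum_eq_single_of_mem (⟨fullP m, fullP_nc m⟩ : NCP (m + 1))
    (Finset.mem_univ _) ?_] at h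
  · rw [partCum_fullP_const] at h
    exact h.symm
  · intro ν _ hνne
    obtain ⟨B, hB⟩ := ν.1.parts_nonempty (by
      rw [Finset.bot_eq_empty]
      exact Finset.univ_nonempty.ne_empty)
    have hBne : B ≠ Finset.univ := by
      intro hh
      exact hνne (Subtype.ext (eq_fullP (hh ▸ hB)))
    have hlt : B.card < m + 1 := by
      have := Finset.card_lt_card
        (Finset.ssubset_iff_subset_ne.2 ⟨Finset.subset_univ _, hBne⟩)
      simpa using this
    obtain ⟨x, hx⟩ := ν.1.nonempty_of_mem_parts hB
    have h1c : 1 ≤ B.card := Finset.card_pos.2 ⟨x, hx⟩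
    rw [partCum]
    apply Finset.prod_eq_zero hB
    obtain ⟨j, hj⟩ : ∃ j, B.card = j + 1 := ⟨B.card - 1, by omega⟩
    exact (Rconst_congr R X hj).trans (IH j (by omega))

end AuxStmt6e
/-- Lemma 3.1. For freely independent, self-adjoint, centered
`X`, `Y` and `α, β > 0`: `β R_k(X) = α R_k(Y)` for all `k ≥ 1` if and only if
`τ(X | X + Y) = (α/(α+β)) (X + Y)`. -/
theorem stmt6 {A : Type*} [Ring A] [Algebra ℂ A] [StarRing A] [TopologicalSpace A]
    (ts : TracialState A) (R : (k : ℕ) → (Fin k → A) → ℂ)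
    (hR : MomentCumulant ts.τ R)
    (X Y : A) (hX : star X = X) (hY : star Y = Y)
    (hfree : FreeIndep R X Y)
    (hXc : ts.τ X = 0) (hYc : ts.τ Y = 0)
    (α β : ℝ) (hα : 0 < α) (hβ : 0 < β) :
    (∀ k : ℕ, 1 ≤ k → (β : ℂ) * R k (fun _ => X) = (α : ℂ) * R k (fun _ => Y)) ↔
      IsCondExp ts.τ (X + Y) X (((α / (α + β) : ℝ) : ℂ) • (X + Y)) := by
  classical
  set Z : A := X + Y with hZ
  set c : ℂ := ((α / (α + β) : ℝ) : ℂ) with hc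
  have hab0 : (α : ℂ) + (β : ℂ) ≠ 0 := by
    rw [← Complex.ofReal_add]
    rw [Complex.ofReal_ne_zero]
    positivity
  have hcval : c = (α : ℂ) / ((α : ℂ) + (β : ℂ)) := by
    rw [hc]
    push_cast [ne_of_gt (by positivity : (0:ℝ) < α + β)]
    ring
  constructor
  · intro hcum
    have hmom : ∀ m, (β : ℂ) * ts.τ (X * Z ^ m) = (α : ℂ) * ts.τ (Y * Z ^ m) :=
      fun m => mom_ratio ts.τ R hR X Y hfree (α : ℂ) (β : ℂ) hcum m
    have hsplit : ∀ m, ts.τ (Z ^ (m + 1)) = ts.τ (X * Z ^ m) + ts.τ (Y * Z ^ m) := by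
      intro m
      rw [pow_succ', hZ, add_mul, map_add]
    have hM : ∀ m, ts.τ (X * Z ^ m) = c * ts.τ (Z ^ (m + 1)) := by
      intro m
      rw [hcval, hsplit m]
      have h2 := hmom m
      field_simp
      linear_combination h2
    constructor
    · exact subset_closure
        (SetLike.mem_coe.2 (Subalgebra.smul_mem _
          (Algebra.subset_adjoin (Set.mem_singleton Z)) c))
    · intro y hy
      have hclosed : IsClosed {y : A | ts.τ (X * y) = ts.τ ((c • Z) * y)} :=
        isClosed_eq (ts.normal X) (ts.normal (c • Z))
      have hsub : ((Algebra.adjoin ℂ ({Z} : Set A) : Subalgebra ℂ A) : Set A)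
          ⊆ {y : A | ts.τ (X * y) = ts.τ ((c • Z) * y)} := by
        intro p hp
        rw [SetLike.mem_coe, Algebra.adjoin_singleton_eq_range_aeval, AlgHom.mem_range] at hp
        obtain ⟨q, rfl⟩ := hp
        show ts.τ (X * _) = ts.τ ((c • Z) * _)
        rw [Polynomial.aeval_eq_sum_range, Finset.mul_sum, Finset.mul_sum, map_sum, map_sum]
        refine Finset.sum_congr rfl fun i _ => ?_
        rw [mul_smul_comm, mul_smul_comm, map_smul, map_smul]
        congr 1
        rw [smul_mul_assoc, map_smul, smul_eq_mul, ← pow_succ']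
        exact hM i
      exact (closure_minimal hsub hclosed) hy
  · intro hce
    have hM : ∀ m, ts.τ (X * Z ^ m) = c * ts.τ (Z ^ (m + 1)) := by
      intro m
      have hmem : Z ^ m ∈ vnGen Z :=
        subset_closure (SetLike.mem_coe.2
          (pow_mem (Algebra.subset_adjoin (Set.mem_singleton Z)) m))
      have h := hce.2 (Z ^ m) hmem
      rw [h, smul_mul_assoc, map_smul, smul_eq_mul, ← pow_succ']
    have hmom : ∀ m, (β : ℂ) * ts.τ (X * Z ^ m) = (α : ℂ) * ts.τ (Y * Z ^ m) := by
      intro m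
      have hsplit : ts.τ (Z ^ (m + 1)) = ts.τ (X * Z ^ m) + ts.τ (Y * Z ^ m) := by
        rw [pow_succ', hZ, add_mul, map_add]
      have h2 := hM m
      rw [hcval, hsplit] at h2
      field_simp at h2
      linear_combination h2
    by_cases hxy : X = Y
    · subst hxy
      intro k hk
      by_cases hba : (β : ℂ) = (α : ℂ)
      · rw [hba]
      · have hX0 : ∀ n, 1 ≤ n → ts.τ (X ^ n) = 0 := by
          intro n hn
          match n, hn with
          | 1, _ => simpa using hXc
          | (m + 2), _ =>
            have h2 := hmom (m + 1)
            have hZ2 : Z = (2 : ℂ) • X := by rw [hZ, two_smul]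
            have hXZ : X * Z ^ (m + 1) = ((2 : ℂ) ^ (m + 1)) • X ^ (m + 2) := by
              rw [hZ2, smul_pow, mul_smul_comm, ← pow_succ']
            rw [hXZ, map_smul, smul_eq_mul] at h2
            have h3 : ((β : ℂ) - α) * ((2 : ℂ) ^ (m + 1) * ts.τ (X ^ (m + 2))) = 0 := by
              linear_combination h2
            rcases mul_eq_zero.1 h3 with h | h
            · exact absurd (sub_eq_zero.1 h) hba
            · rcases mul_eq_zero.1 h with h | h
              · exact absurd h (pow_ne_zero _ two_ne_zero)
              · exact h
        rw [cum_zero_of_moments ts.τ R hR X hX0 k hk, mul_zero, mul_zero]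
    · exact cum_ratio_of_mom ts.τ R hR X Y hfree hxy (α : ℂ) (β : ℂ) hmom
end

section
/- Let (X_t)_{t≥0} be a free Lévy process with τ(X_t) = 0 and τ(X_t²) = t for all t > 0, so that t R_k(X_{2t}) = 2t R_k(X_t) for all k. Then for every k ≥ 1: R_k(2tX_t − tX_{2t}, X_{2t}, …, X_{2t}) = 0; the mixed free cumulants with the element 2tX_t − tX_{2t} appearing in exactly two of the first three slots also vanish; and R_k(2tX_t − tX_{2t}, 2tX_t − tX_{2t}, 2tX_t − tX_{2t}, X_{2t}, …, X_{2t}) = t²(2t R_k(X_t) − t R_k(X_{2t})) = 0. Consequently the third conditional central moment vanishes: τ((X_t − τ(X_t|X_{2t}))³ | X_{2t}) = τ((X_t − ½X_{2t})³ | X_{2t}) = 0 for all t > 0. -/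
/-- A free Lévy process: a noncommutative process with `X₀ = 0`, self-adjoint
values, stationary increments (increments over intervals of equal length have
the same moments) and freely independent increments (mixed free cumulants of
increments over non-overlapping intervals vanish). -/
structure IsFreeLevy {A : Type*} [Ring A] [Algebra ℂ A] [StarRing A]
    (τ : A →ₗ[ℂ] ℂ) (R : (k : ℕ) → (Fin k → A) → ℂ) (Xp : ℝ → A) : Prop where
  init : Xp 0 = 0
  selfadj : ∀ t : ℝ, 0 ≤ t → star (Xp t) = Xp t
  stationary : ∀ s t : ℝ, 0 ≤ s → 0 ≤ t → ∀ n : ℕ,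
    τ ((Xp (t + s) - Xp t) ^ n) = τ (Xp s ^ n)
  freeInc : ∀ (k : ℕ) (g : Fin k → ℝ × ℝ),
    (∀ i, 0 ≤ (g i).1 ∧ (g i).1 ≤ (g i).2) →
    (∀ i j, (g i).2 ≤ (g j).1 ∨ (g j).2 ≤ (g i).1 ∨ g i = g j) →
    (∃ i j, g i ≠ g j) →
    R k (fun i => Xp (g i).2 - Xp (g i).1) = 0

open Finset Function

theorem MultilinearMap.exists_coe_eq_of_linear_update {R ι M N : Type*} [CommSemiring R]
    [DecidableEq ι] [AddCommMonoid M] [AddCommMonoid N] [Module R M] [Module R N]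
    (F : (ι → M) → N) (hF : ∀ X i, ∃ L : M →ₗ[R] N, ∀ v, F (update X i v) = L v) :
    ∃ f : MultilinearMap R (fun _ : ι => M) N, ⇑f = F := by
  refine ⟨MultilinearMap.mk' F (fun X i a b => ?_) (fun X i c a => ?_), rfl⟩ <;>
  · obtain ⟨L, hL⟩ := hF X i
    simp only [hL, map_add, map_smul]

theorem MultilinearMap.apply_smul_add_smul_of_mixed_eq_zero {R ι M N : Type*} [CommSemiring R]
    [Fintype ι] [DecidableEq ι] [Nonempty ι] [AddCommMonoid M] [AddCommMonoid N] [Module R M]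
    [Module R N] (f : MultilinearMap R (fun _ : ι => M) N) (y d : M)
    (hmixed : ∀ s : Finset ι, s.Nonempty → s ≠ univ → f (s.piecewise (fun _ => y) fun _ => d) = 0)
    (a b : ι → R) :
    f (fun i => a i • y + b i • d) = (∏ i, a i) • f (fun _ => y) + (∏ i, b i) • f (fun _ => d) := by
  have hsplit : ∀ s : Finset ι, f (s.piecewise (fun i => a i • y) fun i => b i • d)
      = (∏ i, s.piecewise a b i) • f (s.piecewise (fun _ => y) fun _ => d) := by
    intro s
    rw [← f.map_smul_univ]
    congr 1
    ext i
    by_cases hi : i ∈ s <;> simp [hi]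
  rw [show (fun i => a i • y + b i • d) = (fun i => a i • y) + fun i => b i • d from rfl,
    f.map_add_univ, sum_eq_add univ ∅ univ_nonempty.ne_empty]
  · rw [hsplit, hsplit]
    simp only [piecewise_univ, piecewise_empty]
  · intro s _ hs
    rw [hsplit, hmixed s (nonempty_iff_ne_empty.2 hs.2) hs.1, smul_zero]
  · simp
  · simp

theorem Finset.card_filter_orderEmbOfFin {α : Type*} [LinearOrder α] (s : Finset α) {k : ℕ}
    (h : #s = k) (p : α → Prop) [DecidablePred p] :
    #{i | p (s.orderEmbOfFin h i)} = #(s.filter p) := by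
  conv_rhs => rw [← map_orderEmbOfFin_univ s h, filter_map, card_map]
  rfl

theorem Finpartition.exists_odd_card_filter {α : Type*} [DecidableEq α] {s : Finset α}
    (P : Finpartition s) (p : α → Prop) [DecidablePred p] (hodd : Odd #(s.filter p)) :
    ∃ B ∈ P.parts, Odd #(B.filter p) := by
  by_contra! heven
  simp only [Nat.not_odd_iff_even] at heven
  have hsum : ∑ B ∈ P.parts, #(B.filter p) = #(s.filter p) := by
    rw [← card_biUnion, ← filter_biUnion]
    · exact congrArg (fun t => #(t.filter p)) P.biUnion_parts
    · exact fun B hB C hC hBC => disjoint_filter_filter (P.disjoint hB hC hBC)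
  exact Nat.not_even_iff_odd.2 hodd (hsum ▸ even_sum _ heven)

theorem Finpartition.card_lt_of_ne_indiscrete {α : Type*} [DecidableEq α] {s : Finset α}
    (hs : s ≠ ⊥) {P : Finpartition s} (hP : P ≠ indiscrete hs) {B : Finset α} (hB : B ∈ P.parts) :
    #B < #s := by
  refine card_lt_card (ssubset_of_subset_of_ne (P.le hB) fun hBs => hP ?_)
  ext C
  rw [indiscrete_parts, mem_singleton]
  refine ⟨fun hC => ?_, fun hC => by rw [hC]; rwa [hBs] at hB⟩
  obtain ⟨a, ha⟩ := P.nonempty_of_mem_parts hC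
  exact (P.eq_of_mem_parts hC hB ha (hBs ▸ P.le hC ha)).trans hBs

theorem isNonCrossing_indiscrete {n : ℕ} (h : (univ : Finset (Fin n)) ≠ ⊥) :
    IsNonCrossing (Finpartition.indiscrete h) := by
  intro B hB C hC hBC
  rw [Finpartition.indiscrete_parts, mem_singleton] at hB hC
  exact absurd (hB.trans hC.symm) hBC

section Cumulants

variable {A : Type*} [Ring A]

theorem partCum_indiscrete (R : (k : ℕ) → (Fin k → A) → ℂ) {n : ℕ}
    (h : (univ : Finset (Fin n)) ≠ ⊥) (X : Fin n → A) :
    partCum R X (Finpartition.indiscrete h) = R n X := by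
  have hcast : ∀ m (hm : m = n) (g : Fin m → A), R m g = R n (g ∘ Fin.cast hm.symm) := by
    rintro m rfl g
    rfl
  have hemb : Fin.cast (card_fin n) = ⇑(univ.orderEmbOfFin rfl) :=
    orderEmbOfFin_unique rfl (fun _ => mem_univ _) (Fin.cast_strictMono _)
  unfold partCum
  rw [Finpartition.indiscrete_parts, prod_singleton, hcast _ (card_fin n)]
  congr 1
  funext i
  rw [comp_apply, coe_orderIsoOfFin_apply, ← hemb, Fin.cast_cast, Fin.cast_eq_self]

variable [Algebra ℂ A]

theorem partCum_update_exists_linearMap (R : (k : ℕ) → (Fin k → A) → ℂ) {n : ℕ}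
    (ν : Finpartition (univ : Finset (Fin n)))
    (hR : ∀ B ∈ ν.parts, ∃ f : MultilinearMap ℂ (fun _ : Fin #B => A) ℂ, ⇑f = R #B)
    (X : Fin n → A) (i : Fin n) :
    ∃ L : A →ₗ[ℂ] ℂ, ∀ v, partCum R (update X i v) ν = L v := by
  set P := ν.part i
  have hP : P ∈ ν.parts := ν.part_mem.2 (mem_univ i)
  have hiP : i ∈ P := ν.mem_part_self.2 (mem_univ i)
  obtain ⟨f, hf⟩ := hR P hP
  set e := P.orderEmbOfFin rfl
  set j := (P.orderIsoOfFin rfl).symm ⟨i, hiP⟩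
  have hj : e j = i := congrArg Subtype.val ((P.orderIsoOfFin rfl).apply_symm_apply _)
  refine ⟨(∏ B ∈ ν.parts.erase P, R #B fun k => X (B.orderEmbOfFin rfl k)) •
    f.toLinearMap (X ∘ e) j, fun v => ?_⟩
  have hblock : (fun k => update X i v (e k)) = update (X ∘ e) j v := by
    rw [← hj]
    exact update_comp_eq_of_injective X e.injective j v
  have hother : ∀ B ∈ ν.parts.erase P,
      (fun k => update X i v (B.orderEmbOfFin rfl k)) = fun k => X (B.orderEmbOfFin rfl k) := by
    intro B hB
    refine update_comp_eq_of_forall_ne' X v fun k hk => (mem_erase.1 hB).1 ?_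
    exact ν.eq_of_mem_parts (mem_erase.1 hB).2 hP (hk ▸ orderEmbOfFin_mem B rfl k) hiP
  unfold partCum
  rw [← mul_prod_erase _ _ hP, LinearMap.smul_apply, MultilinearMap.toLinearMap_apply, hf,
    smul_eq_mul, mul_comm]
  simp only [coe_orderIsoOfFin_apply]
  rw [hblock, prod_congr rfl fun B hB => congrArg (R #B) (hother B hB)]

theorem MomentCumulant.exists_multilinearMap {τ : A →ₗ[ℂ] ℂ} {R : (k : ℕ) → (Fin k → A) → ℂ}
    (hR : MomentCumulant τ R) (n : ℕ) :
    ∃ f : MultilinearMap ℂ (fun _ : Fin n => A) ℂ, ⇑f = R n := by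
  induction n using Nat.strong_induction_on with
  | _ n ih =>
  rcases n.eq_zero_or_pos with rfl | hn
  · exact ⟨MultilinearMap.constOfIsEmpty ℂ _ (R 0 finZeroElim),
      funext fun X => congrArg (R 0) (Subsingleton.elim _ _)⟩
  classical
  have huniv : (univ : Finset (Fin n)) ≠ ⊥ := (univ_nonempty_iff.2 ⟨⟨0, hn⟩⟩).ne_empty
  set top : {ν // IsNonCrossing ν} := ⟨_, isNonCrossing_indiscrete huniv⟩
  have hsum : ∀ X, R n X = τ (List.ofFn X).prod - ∑ ν ∈ univ.erase top, partCum R X ν.1 := by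
    intro X
    rw [hR n hn X, finsum_eq_sum_of_fintype, ← add_sum_erase _ _ (mem_univ top),
      partCum_indiscrete, add_sub_cancel_right]
  have hsmall : ∀ ν ∈ univ.erase top, ∀ B ∈ ν.1.parts,
      ∃ f : MultilinearMap ℂ (fun _ : Fin #B => A) ℂ, ⇑f = R #B := fun ν hν B hB =>
    ih _ ((Finpartition.card_lt_of_ne_indiscrete huniv
      (fun h => (mem_erase.1 hν).1 (Subtype.ext h)) hB).trans_eq (card_fin n))
  refine MultilinearMap.exists_coe_eq_of_linear_update _ fun X i => ?_
  choose! L hL using fun ν hν => partCum_update_exists_linearMap R ν.1 (hsmall ν hν) X i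
  refine ⟨τ ∘ₗ (MultilinearMap.mkPiAlgebraFin ℂ n A).toLinearMap X i - ∑ ν ∈ univ.erase top, L ν,
    fun v => ?_⟩
  rw [hsum, sum_congr rfl fun ν hν => hL ν hν v]
  simp

end Cumulants

theorem List.prod_ofFn_ite_lt {M : Type*} [Monoid M] (a b : M) (k m : ℕ) :
    (List.ofFn fun i : Fin (k + m) => if (i : ℕ) < k then a else b).prod = a ^ k * b ^ m := by
  simp [List.ofFn_add, List.prod_append]

theorem TracialState.isCondExp_zero_of_forall_pow {A : Type*} [Ring A] [Algebra ℂ A] [StarRing A]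
    [TopologicalSpace A] (ts : TracialState A) {U V : A} (h : ∀ m : ℕ, ts.τ (U * V ^ m) = 0) :
    IsCondExp ts.τ V U 0 := by
  refine ⟨subset_closure (Subalgebra.zero_mem _), fun Y hY => ?_⟩
  rw [zero_mul, map_zero]
  refine closure_minimal (fun y hy => ?_) ((isClosed_singleton (x := 0)).preimage (ts.normal U)) hY
  rw [Algebra.adjoin_singleton_eq_range_aeval] at hy
  obtain ⟨p, rfl⟩ := hy
  simp [Polynomial.aeval_eq_sum_range, mul_sum, h]

section FreeLevy

variable {A : Type*} [Ring A] [Algebra ℂ A] [StarRing A] {τ : A →ₗ[ℂ] ℂ}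
  {R : (k : ℕ) → (Fin k → A) → ℂ} {Xp : ℝ → A}

theorem IsFreeLevy.cumulant_piecewise_eq_zero (hX : IsFreeLevy τ R Xp) {a b c : ℝ} (ha : 0 ≤ a)
    (hab : a < b) (hbc : b ≤ c) {k : ℕ} (s : Finset (Fin k)) (hs : s.Nonempty) (hs' : s ≠ univ) :
    R k (s.piecewise (fun _ => Xp b - Xp a) fun _ => Xp c - Xp b) = 0 := by
  obtain ⟨i, hi⟩ := hs
  obtain ⟨j, hj⟩ : ∃ j, j ∉ s := by simpa [eq_univ_iff_forall] using hs'
  have := hX.freeInc k (fun l => if l ∈ s then (a, b) else (b, c))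
    (fun l => by split_ifs <;> constructor <;> linarith)
    (fun l m => by split_ifs <;> simp)
    ⟨i, j, by simp [hi, hj, hab.ne]⟩
  convert this using 2
  ext l
  by_cases hl : l ∈ s <;> simp [hl]

theorem IsFreeLevy.cumulant_smul_add_smul (hR : MomentCumulant τ R) (hX : IsFreeLevy τ R Xp)
    {s u : ℝ} (hs : 0 < s) (hsu : s ≤ u) {k : ℕ} (hk : 0 < k) (a b : Fin k → ℂ) :
    R k (fun i => a i • Xp s + b i • (Xp u - Xp s)) =
      (∏ i, a i) * R k (fun _ => Xp s) + (∏ i, b i) * R k (fun _ => Xp u - Xp s) := by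
  have : Nonempty (Fin k) := ⟨⟨0, hk⟩⟩
  obtain ⟨f, hf⟩ := hR.exists_multilinearMap k
  rw [← hf]
  refine f.apply_smul_add_smul_of_mixed_eq_zero _ _ (fun S hS hS' => ?_) a b
  simpa [hf, hX.init] using hX.cumulant_piecewise_eq_zero le_rfl hs hsu S hS hS'

theorem IsFreeLevy.cumulant_eq_add (hR : MomentCumulant τ R) (hX : IsFreeLevy τ R Xp)
    {s u : ℝ} (hs : 0 < s) (hsu : s ≤ u) {k : ℕ} (hk : 0 < k) :
    R k (fun _ => Xp u) = R k (fun _ => Xp s) + R k (fun _ => Xp u - Xp s) := by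
  simpa using hX.cumulant_smul_add_smul hR hs hsu hk 1 1

end FreeLevy

section Deviation

variable {A : Type*} [Ring A] [Algebra ℂ A] [StarRing A] {τ : A →ₗ[ℂ] ℂ}
  {R : (k : ℕ) → (Fin k → A) → ℂ} {Xp : ℝ → A} {t : ℝ}

/-- `2t (X_t - ½ X_{2t})`, i.e. `2t` times the deviation of `X_t` from `τ(X_t | X_{2t})`. -/
noncomputable def scaledDeviation (Xp : ℝ → A) (t : ℝ) : A :=
  (2 * (t : ℂ)) • Xp t - (t : ℂ) • Xp (2 * t)

theorem IsFreeLevy.cumulant_ite_scaledDeviation (hR : MomentCumulant τ R)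
    (hX : IsFreeLevy τ R Xp) (ht : 0 < t) {k : ℕ} (hk : 0 < k) (p : Fin k → Prop)
    [DecidablePred p] :
    R k (fun i => if p i then scaledDeviation Xp t else Xp (2 * t)) =
      (t : ℂ) ^ #{i | p i} * R k (fun _ => Xp t) +
        (-t : ℂ) ^ #{i | p i} * R k (fun _ => Xp (2 * t) - Xp t) := by
  have hword : (fun i => if p i then scaledDeviation Xp t else Xp (2 * t)) = fun i =>
      (if p i then (t : ℂ) else 1) • Xp t + (if p i then (-t : ℂ) else 1) • (Xp (2 * t) - Xp t) := by
    ext i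
    split_ifs
    · simp only [scaledDeviation]
      module
    · simp
  rw [hword, hX.cumulant_smul_add_smul hR ht (by linarith) hk]
  simp [prod_ite]

theorem IsFreeLevy.cumulant_increment_eq (hR : MomentCumulant τ R) (hX : IsFreeLevy τ R Xp)
    (ht : 0 < t) {k : ℕ} (hk : 0 < k)
    (hcum : (t : ℂ) * R k (fun _ => Xp (2 * t)) = 2 * (t : ℂ) * R k (fun _ => Xp t)) :
    R k (fun _ => Xp (2 * t) - Xp t) = R k (fun _ => Xp t) := by
  have ht' : (t : ℂ) ≠ 0 := by exact_mod_cast ht.ne'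
  rw [hX.cumulant_eq_add hR ht (by linarith) hk] at hcum
  exact mul_left_cancel₀ ht' (by linear_combination hcum)

theorem IsFreeLevy.cumulant_ite_scaledDeviation_eq_zero_of_odd (hR : MomentCumulant τ R)
    (hX : IsFreeLevy τ R Xp) (ht : 0 < t) {k : ℕ}
    (hcum : (t : ℂ) * R k (fun _ => Xp (2 * t)) = 2 * (t : ℂ) * R k (fun _ => Xp t))
    (p : Fin k → Prop) [DecidablePred p] (hodd : Odd #{i | p i}) :
    R k (fun i => if p i then scaledDeviation Xp t else Xp (2 * t)) = 0 := by
  have hk : 0 < k := Nat.pos_of_ne_zero (by rintro rfl; simp at hodd)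
  rw [hX.cumulant_ite_scaledDeviation hR ht hk, hX.cumulant_increment_eq hR ht hk hcum,
    hodd.neg_pow]
  ring

theorem IsFreeLevy.partCum_ite_scaledDeviation_eq_zero_of_odd (hR : MomentCumulant τ R)
    (hX : IsFreeLevy τ R Xp) (ht : 0 < t)
    (hcum : ∀ k, (t : ℂ) * R k (fun _ => Xp (2 * t)) = 2 * (t : ℂ) * R k (fun _ => Xp t))
    {n : ℕ} (ν : Finpartition (univ : Finset (Fin n))) (p : Fin n → Prop) [DecidablePred p]
    (hodd : Odd #{i | p i}) :
    partCum R (fun i => if p i then scaledDeviation Xp t else Xp (2 * t)) ν = 0 := by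
  obtain ⟨B, hB, hBodd⟩ := ν.exists_odd_card_filter p hodd
  refine prod_eq_zero hB (hX.cumulant_ite_scaledDeviation_eq_zero_of_odd hR ht (hcum _)
    (fun i => p (B.orderEmbOfFin rfl i)) ?_)
  rwa [card_filter_orderEmbOfFin]

theorem IsFreeLevy.moment_scaledDeviation_pow_three_mul_pow (hR : MomentCumulant τ R)
    (hX : IsFreeLevy τ R Xp) (ht : 0 < t)
    (hcum : ∀ k, (t : ℂ) * R k (fun _ => Xp (2 * t)) = 2 * (t : ℂ) * R k (fun _ => Xp t))
    (m : ℕ) :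
    τ (scaledDeviation Xp t ^ 3 * Xp (2 * t) ^ m) = 0 := by
  rw [← List.prod_ofFn_ite_lt, hR _ (by omega)]
  refine finsum_eq_zero_of_forall_eq_zero fun ν =>
    hX.partCum_ite_scaledDeviation_eq_zero_of_odd hR ht hcum ν.1 _ ?_
  simp [Fin.card_filter_val_lt, Nat.odd_iff]

end Deviation

theorem stmt15_general {A : Type*} [Ring A] [Algebra ℂ A] [StarRing A] [TopologicalSpace A]
    (ts : TracialState A) (R : (k : ℕ) → (Fin k → A) → ℂ)
    (hR : MomentCumulant ts.τ R)
    (Xp : ℝ → A) (hLevy : IsFreeLevy ts.τ R Xp)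
    (hcum : ∀ t : ℝ, 0 < t → ∀ k : ℕ,
      (t : ℂ) * R k (fun _ => Xp (2 * t)) = 2 * (t : ℂ) * R k (fun _ => Xp t)) :
    (∀ t : ℝ, 0 < t → ∀ k : ℕ, 1 ≤ k →
      R k (fun i : Fin k =>
          if (i : ℕ) = 0 then (2 * (t : ℂ)) • Xp t - (t : ℂ) • Xp (2 * t)
          else Xp (2 * t)) = 0) ∧
    (∀ t : ℝ, 0 < t → ∀ n : ℕ,
      ∀ ν : Finpartition (Finset.univ : Finset (Fin (n + 3))), IsNonCrossing ν →
        ∀ B ∈ ν.parts, (0 : Fin (n + 3)) ∈ B →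
          (((1 : Fin (n + 3)) ∈ B ∧ (2 : Fin (n + 3)) ∉ B) ∨
            ((2 : Fin (n + 3)) ∈ B ∧ (1 : Fin (n + 3)) ∉ B)) →
          partCum R (fun i : Fin (n + 3) =>
              if (i : ℕ) < 3 then (2 * (t : ℂ)) • Xp t - (t : ℂ) • Xp (2 * t)
              else Xp (2 * t)) ν = 0) ∧
    (∀ t : ℝ, 0 < t → ∀ k : ℕ, 3 ≤ k →
      R k (fun i : Fin k =>
            if (i : ℕ) < 3 then (2 * (t : ℂ)) • Xp t - (t : ℂ) • Xp (2 * t)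
            else Xp (2 * t))
          = (t : ℂ) ^ 2 * (2 * (t : ℂ) * R k (fun _ => Xp t)
              - (t : ℂ) * R k (fun _ => Xp (2 * t))) ∧
        (t : ℂ) ^ 2 * (2 * (t : ℂ) * R k (fun _ => Xp t)
            - (t : ℂ) * R k (fun _ => Xp (2 * t))) = 0) ∧
    (∀ t : ℝ, 0 < t →
      IsCondExp ts.τ (Xp (2 * t)) ((Xp t - ((1 / 2 : ℂ)) • Xp (2 * t)) ^ 3) 0) := by
  refine ⟨fun t ht k hk => ?_, fun t ht n ν _ _ _ _ _ => ?_, fun t ht k hk => ⟨?_, ?_⟩,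
    fun t ht => ?_⟩
  · refine hLevy.cumulant_ite_scaledDeviation_eq_zero_of_odd hR ht (hcum t ht k) _ ?_
    rw [show ({i | (i : ℕ) = 0} : Finset (Fin k)) = {⟨0, hk⟩} by ext; simp [Fin.ext_iff]]
    simp
  · refine hLevy.partCum_ite_scaledDeviation_eq_zero_of_odd hR ht (hcum t ht) ν _ ?_
    simp [Fin.card_filter_val_lt, Nat.odd_iff]
  · refine (hLevy.cumulant_ite_scaledDeviation hR ht (by omega) _).trans ?_
    rw [hLevy.cumulant_eq_add hR ht (u := 2 * t) (by linarith) (by omega : 0 < k), Fin.card_filter_val_lt,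
      min_eq_right hk]
    ring
  · linear_combination -(t : ℂ) ^ 2 * hcum t ht k
  · have ht' : (t : ℂ) ≠ 0 := by exact_mod_cast ht.ne'
    have hU : Xp t - (1 / 2 : ℂ) • Xp (2 * t) = (2 * (t : ℂ))⁻¹ • scaledDeviation Xp t := by
      rw [scaledDeviation]
      match_scalars <;> field_simp
    refine ts.isCondExp_zero_of_forall_pow fun m => ?_
    rw [hU, smul_pow, smul_mul_assoc, map_smul,
      hLevy.moment_scaledDeviation_pow_three_mul_pow hR ht (hcum t ht), smul_zero]

/-- proof of Proposition 3.6. Let `(X_t)` be a free Lévy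
process with `τ(X_t) = 0`, `τ(X_t²) = t`, so that `t R_k(X_{2t}) = 2t R_k(X_t)`
for all `k`. Then for all `t > 0` and `k ≥ 1`,
`R_k(2tX_t − tX_{2t}, X_{2t}, …, X_{2t}) = 0`; every partition term in which
the block containing the first slot contains exactly one of the second and
third slots (where the first three entries are `2tX_t − tX_{2t}` and the rest
are `X_{2t}`) vanishes; for `k ≥ 3`
`R_k(2tX_t − tX_{2t}, 2tX_t − tX_{2t}, 2tX_t − tX_{2t}, X_{2t}, …, X_{2t})
 = t²(2t R_k(X_t) − t R_k(X_{2t})) = 0`; and consequently the third conditional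
central moment vanishes: `τ((X_t − ½X_{2t})³ | X_{2t}) = 0`. -/
theorem stmt15 {A : Type*} [Ring A] [Algebra ℂ A] [StarRing A] [TopologicalSpace A]
    (ts : TracialState A) (R : (k : ℕ) → (Fin k → A) → ℂ)
    (hR : MomentCumulant ts.τ R)
    (Xp : ℝ → A) (hLevy : IsFreeLevy ts.τ R Xp)
    (hmean : ∀ t : ℝ, 0 < t → ts.τ (Xp t) = 0)
    (hvar : ∀ t : ℝ, 0 < t → ts.τ (Xp t ^ 2) = (t : ℂ))
    (hcum : ∀ t : ℝ, 0 < t → ∀ k : ℕ,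
      (t : ℂ) * R k (fun _ => Xp (2 * t)) = 2 * (t : ℂ) * R k (fun _ => Xp t)) :
    (∀ t : ℝ, 0 < t → ∀ k : ℕ, 1 ≤ k →
      R k (fun i : Fin k =>
          if (i : ℕ) = 0 then (2 * (t : ℂ)) • Xp t - (t : ℂ) • Xp (2 * t)
          else Xp (2 * t)) = 0) ∧
    (∀ t : ℝ, 0 < t → ∀ n : ℕ,
      ∀ ν : Finpartition (Finset.univ : Finset (Fin (n + 3))), IsNonCrossing ν →
        ∀ B ∈ ν.parts, (0 : Fin (n + 3)) ∈ B →
          (((1 : Fin (n + 3)) ∈ B ∧ (2 : Fin (n + 3)) ∉ B) ∨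
            ((2 : Fin (n + 3)) ∈ B ∧ (1 : Fin (n + 3)) ∉ B)) →
          partCum R (fun i : Fin (n + 3) =>
              if (i : ℕ) < 3 then (2 * (t : ℂ)) • Xp t - (t : ℂ) • Xp (2 * t)
              else Xp (2 * t)) ν = 0) ∧
    (∀ t : ℝ, 0 < t → ∀ k : ℕ, 3 ≤ k →
      R k (fun i : Fin k =>
            if (i : ℕ) < 3 then (2 * (t : ℂ)) • Xp t - (t : ℂ) • Xp (2 * t)
            else Xp (2 * t))
          = (t : ℂ) ^ 2 * (2 * (t : ℂ) * R k (fun _ => Xp t)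
              - (t : ℂ) * R k (fun _ => Xp (2 * t))) ∧
        (t : ℂ) ^ 2 * (2 * (t : ℂ) * R k (fun _ => Xp t)
            - (t : ℂ) * R k (fun _ => Xp (2 * t))) = 0) ∧
    (∀ t : ℝ, 0 < t →
      IsCondExp ts.τ (Xp (2 * t)) ((Xp t - ((1 / 2 : ℂ)) • Xp (2 * t)) ^ 3) 0) :=
  stmt15_general ts R hR Xp hLevy hcum
end
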